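/- arXiv:2512.11150 — 2 statements merged into one kernel-verified Lean document; each statement's English description precedes it below -/
import Mathlib

section
/- Let (X, Y) be random with Y real-valued and square-integrable, let W = W(X) ≥ 0 be X-measurable with E[W²·Var(Y|X)] < ∞, and let T be a measurable event in the σ-algebra of X with σ_T² := ess inf over T of Var(Y | X) > 0. Then Var(W·Y) ≥ σ_T² · E[W² · 1_T]. Combined with the weight second-moment identity, if W = dπ'/dπ₀ with α = π'(T), β = π₀(T), this gives Var_{π₀}(W·Y) ≥ σ_T² · (α²/β) · (1 + χ²(π'_T ∥ π₀,T)). -/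
/-!
Conditioning on `X`, the law of total variance gives `Var(WY) ≥ E[Var(WY | X)]`, and since `W` is
`X`-measurable, `Var(WY | X) = W² Var(Y | X)`, which is at least `σ_T² W²` on `T` and nonnegative
off it. For `W = dπ'/dπ₀`, the normalised restriction `π'_T` has density `(β/α) W` with respect
to `π₀_T`, so `E_{π₀}[W² 1_T] = (α²/β) E_{π₀_T}[(dπ'_T/dπ₀_T)²] = (α²/β)(1 + χ²(π'_T ∥ π₀_T))`.
-/

open MeasureTheory ProbabilityTheory

namespace MeasureTheory

variable {Ω : Type*} {mΩ : MeasurableSpace Ω} {μ : Measure Ω}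

lemma mul_setIntegral_le_integral_mul {f g : Ω → ℝ} {c : ℝ} {s : Set Ω} (hs : MeasurableSet s)
    (hc : 0 ≤ c) (hf : 0 ≤ᵐ[μ] f) (hg : 0 ≤ᵐ[μ] g) (hcg : ∀ᵐ x ∂μ, x ∈ s → c ≤ g x)
    (hfg : Integrable (fun x => f x * g x) μ) :
    c * ∫ x in s, f x ∂μ ≤ ∫ x, f x * g x ∂μ := by
  rw [← integral_const_mul, ← integral_indicator hs]
  refine integral_mono_of_nonneg ?_ hfg ?_
  · filter_upwards [hf] with x hx
    exact Set.indicator_nonneg (fun _ _ => mul_nonneg hc hx) x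
  · filter_upwards [hf, hg, hcg] with x hfx hgx hcgx
    by_cases hx : x ∈ s
    · rw [Set.indicator_of_mem hx, mul_comm]
      exact mul_le_mul_of_nonneg_left (hcgx hx) hfx
    · rw [Set.indicator_of_notMem hx]
      exact mul_nonneg hfx hgx

end MeasureTheory

namespace ProbabilityTheory

section CondVar

variable {Ω : Type*} {m m₀ : MeasurableSpace Ω} {μ : Measure[m₀] Ω}

lemma integral_condVar_le_variance (hm : m ≤ m₀) [IsProbabilityMeasure μ] {X : Ω → ℝ}
    (hX : MemLp X 2 μ) : μ[Var[X; μ | m]] ≤ Var[X; μ] := by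
  rw [← integral_condVar_add_variance_condExp hm hX]
  exact le_add_of_nonneg_right (variance_nonneg _ _)

lemma condVar_mul_of_stronglyMeasurable_left [IsFiniteMeasure μ] {W Y : Ω → ℝ}
    (hW : StronglyMeasurable[m] W) (hY : MemLp Y 2 μ) (hWY : MemLp (W * Y) 2 μ) :
    Var[W * Y; μ | m] =ᵐ[μ] W ^ 2 * Var[Y; μ | m] := by
  have hpull : μ[W * Y | m] =ᵐ[μ] W * μ[Y | m] :=
    condExp_mul_of_stronglyMeasurable_left hW (hWY.integrable one_le_two)
      (hY.integrable one_le_two)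
  have hdev : (W * Y - μ[W * Y | m]) ^ 2 =ᵐ[μ] W ^ 2 * (Y - μ[Y | m]) ^ 2 := by
    filter_upwards [hpull] with x hx
    simp only [Pi.pow_apply, Pi.sub_apply, Pi.mul_apply, hx]
    ring
  have hdev_int : Integrable (W ^ 2 * (Y - μ[Y | m]) ^ 2) μ :=
    ((hWY.sub (hWY.condExp one_le_two)).integrable_sq).congr hdev
  calc Var[W * Y; μ | m] =ᵐ[μ] μ[W ^ 2 * (Y - μ[Y | m]) ^ 2 | m] := condExp_congr_ae hdev
    _ =ᵐ[μ] W ^ 2 * Var[Y; μ | m] :=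
      condExp_mul_of_stronglyMeasurable_left (hW.pow 2) hdev_int
        (hY.sub (hY.condExp one_le_two)).integrable_sq

end CondVar

section Cond

variable {Ω : Type*} {mΩ : MeasurableSpace Ω} {μ ν : Measure Ω} {s : Set Ω}

lemma rnDeriv_cond_ae_eq [IsFiniteMeasure ν] [μ.HaveLebesgueDecomposition ν] (hμν : μ ≪ ν)
    (hs : MeasurableSet s) (hνs : ν s ≠ 0) :
    (μ[|s]).rnDeriv (ν[|s]) =ᵐ[ν[|s]] fun x => ν s * (μ s)⁻¹ * μ.rnDeriv ν x := by
  have hf := μ.measurable_rnDeriv ν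
  have hwd : (ν[|s]).withDensity (fun x => ν s * (μ s)⁻¹ * μ.rnDeriv ν x) = μ[|s] := by
    calc (ν[|s]).withDensity (fun x => ν s * (μ s)⁻¹ * μ.rnDeriv ν x)
        = (ν s)⁻¹ • (ν.restrict s).withDensity ((ν s * (μ s)⁻¹) • μ.rnDeriv ν) :=
          withDensity_smul_measure _ _
      _ = ((ν s)⁻¹ * (ν s * (μ s)⁻¹)) • (ν.withDensity (μ.rnDeriv ν)).restrict s := by
          rw [withDensity_smul _ hf, smul_smul, restrict_withDensity hs]
      _ = μ[|s] := by
          rw [Measure.withDensity_rnDeriv_eq μ ν hμν, ← mul_assoc,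
            ENNReal.inv_mul_cancel hνs (measure_ne_top ν s), one_mul]
          rfl
  rw [← hwd]
  exact Measure.rnDeriv_withDensity _ (hf.const_mul _)

lemma setIntegral_sq_rnDeriv_eq [IsFiniteMeasure μ] [IsFiniteMeasure ν] (hμν : μ ≪ ν)
    (hs : MeasurableSet s) (hμs : μ s ≠ 0) :
    ∫ x in s, (μ.rnDeriv ν x).toReal ^ 2 ∂ν
      = μ.real s ^ 2 / ν.real s * ∫ x, ((μ[|s]).rnDeriv (ν[|s]) x).toReal ^ 2 ∂ν[|s] := by
  have hνs : ν s ≠ 0 := fun h => hμs (hμν h)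
  have hμs' : μ.real s ≠ 0 := ENNReal.toReal_ne_zero.mpr ⟨hμs, measure_ne_top μ s⟩
  have hνs' : ν.real s ≠ 0 := ENNReal.toReal_ne_zero.mpr ⟨hνs, measure_ne_top ν s⟩
  have hsq : ∀ᵐ x ∂ν[|s], ((μ[|s]).rnDeriv (ν[|s]) x).toReal ^ 2
      = (ν.real s / μ.real s) ^ 2 * (μ.rnDeriv ν x).toReal ^ 2 := by
    filter_upwards [rnDeriv_cond_ae_eq hμν hs hνs] with x hx
    simp only [hx, ENNReal.toReal_mul, ENNReal.toReal_inv, measureReal_def]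
    ring
  rw [integral_congr_ae hsq, integral_const_mul, cond, integral_smul_measure,
    ENNReal.toReal_inv, smul_eq_mul, ← measureReal_def]
  field_simp

end Cond

end ProbabilityTheory

theorem cle_variance_lower_bound_general {Ω : Type*} {mΩ : MeasurableSpace Ω}
    (π₀ π' : Measure Ω) [IsProbabilityMeasure π₀] [IsProbabilityMeasure π']
    (hac : π' ≪ π₀)
    (mX : MeasurableSpace Ω) (hmX : mX ≤ mΩ)
    (W : Ω → ℝ) (hWdef : W = fun x => (π'.rnDeriv π₀ x).toReal)
    (hWmeas : StronglyMeasurable[mX] W)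
    (Y : Ω → ℝ) (hY : MemLp Y 2 π₀)
    (hWY : MemLp (fun x => W x * Y x) 2 π₀)
    (T : Set Ω) (hT : MeasurableSet[mX] T)
    (σT : ℝ)
    (hcond : ∀ᵐ x ∂π₀, x ∈ T →
      σT ^ 2 ≤ (π₀[(fun ω => (Y ω - (π₀[Y|mX]) ω) ^ 2)|mX]) x)
    (α β : ℝ) (hα : α = (π' T).toReal) (hβ : β = (π₀ T).toReal)
    (hα0 : 0 < α)
    (πT' πT0 : @Measure Ω mΩ)
    (hπT' : πT' = (π' T)⁻¹ • π'.restrict T)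
    (hπT0 : πT0 = (π₀ T)⁻¹ • π₀.restrict T) :
    σT ^ 2 * (∫ x in T, (W x) ^ 2 ∂π₀) ≤ variance (fun x => W x * Y x) π₀
      ∧ σT ^ 2 * (α ^ 2 / β) *
          (1 + ((∫ x, ((πT'.rnDeriv πT0 x).toReal) ^ 2 ∂πT0) - 1))
        ≤ variance (fun x => W x * Y x) π₀ := by
  have hcondVar := condVar_mul_of_stronglyMeasurable_left hWmeas hY hWY
  have hvar : σT ^ 2 * ∫ x in T, W x ^ 2 ∂π₀ ≤ variance (fun x => W x * Y x) π₀ :=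
    calc σT ^ 2 * ∫ x in T, W x ^ 2 ∂π₀ ≤ ∫ x, W x ^ 2 * Var[Y; π₀ | mX] x ∂π₀ :=
          mul_setIntegral_le_integral_mul (hmX T hT) (sq_nonneg σT)
            (ae_of_all _ fun x => sq_nonneg (W x))
            (condExp_nonneg (ae_of_all _ fun ω => sq_nonneg _)) hcond
            (integrable_condVar.congr hcondVar)
      _ = ∫ x, Var[W * Y; π₀ | mX] x ∂π₀ := (integral_congr_ae hcondVar).symm
      _ ≤ variance (fun x => W x * Y x) π₀ := integral_condVar_le_variance hmX hWY
  obtain rfl : πT' = π'[|T] := hπT'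
  obtain rfl : πT0 = π₀[|T] := hπT0
  have hπ'T : π' T ≠ 0 := fun h => by simp [hα, h] at hα0
  have hmoment := setIntegral_sq_rnDeriv_eq hac (hmX T hT) hπ'T
  refine ⟨hvar, ?_⟩
  rw [add_sub_cancel, mul_assoc, hα, hβ, ← measureReal_def, ← measureReal_def, ← hmoment]
  subst hWdef
  exact hvar

/-- Coverage-Limited Efficiency (CLE) lower bound: if `W = W(X) ≥ 0` is `X`-measurable,
`T` is an `X`-measurable event on which the conditional variance of `Y` given `X` is at
least `σ_T² > 0`, then `Var(W·Y) ≥ σ_T² · E[W² 1_T]`.  Combined with the weight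
second-moment identity for `W = dπ'/dπ₀` with `α = π'(T)`, `β = π₀(T)`, this gives
`Var_{π₀}(W·Y) ≥ σ_T² (α²/β)(1 + χ²(π'_T ∥ π₀_T))`. -/
theorem cle_variance_lower_bound {Ω : Type*} {mΩ : MeasurableSpace Ω}
    (π₀ π' : Measure Ω) [IsProbabilityMeasure π₀] [IsProbabilityMeasure π']
    (hac : π' ≪ π₀)
    (mX : MeasurableSpace Ω) (hmX : mX ≤ mΩ)
    (W : Ω → ℝ) (hWdef : W = fun x => (π'.rnDeriv π₀ x).toReal)
    (hWmeas : StronglyMeasurable[mX] W) (hWnn : ∀ x, 0 ≤ W x)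
    (Y : Ω → ℝ) (hY : MemLp Y 2 π₀)
    (hWY : MemLp (fun x => W x * Y x) 2 π₀)
    (T : Set Ω) (hT : MeasurableSet[mX] T)
    (σT : ℝ) (hσ : 0 < σT)
    (hcond : ∀ᵐ x ∂π₀, x ∈ T →
      σT ^ 2 ≤ (π₀[(fun ω => (Y ω - (π₀[Y|mX]) ω) ^ 2)|mX]) x)
    (hint : Integrable
      (fun x => (W x) ^ 2 * (π₀[(fun ω => (Y ω - (π₀[Y|mX]) ω) ^ 2)|mX]) x) π₀)
    (α β : ℝ) (hα : α = (π' T).toReal) (hβ : β = (π₀ T).toReal)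
    (hα0 : 0 < α) (hβ0 : 0 < β)
    (πT' πT0 : @Measure Ω mΩ)
    (hπT' : πT' = (π' T)⁻¹ • π'.restrict T)
    (hπT0 : πT0 = (π₀ T)⁻¹ • π₀.restrict T)
    (hacT : πT' ≪ πT0)
    (hsq : Integrable (fun x => ((πT'.rnDeriv πT0 x).toReal) ^ 2) πT0) :
    σT ^ 2 * (∫ x in T, (W x) ^ 2 ∂π₀) ≤ variance (fun x => W x * Y x) π₀
      ∧ σT ^ 2 * (α ^ 2 / β) *
          (1 + ((∫ x, ((πT'.rnDeriv πT0 x).toReal) ^ 2 ∂πT0) - 1))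
        ≤ variance (fun x => W x * Y x) π₀ :=
  cle_variance_lower_bound_general π₀ π' hac mX hmX W hWdef hWmeas Y hY hWY T hT σT hcond α β hα hβ
    hα0 πT' πT0 hπT' hπT0
end

section
/- At the optimal allocation of the Square Root Law, the calibration variance share ω = (σ_cal²/m*) / (σ_eval²/n* + σ_cal²/m*) equals the oracle budget share c_Y·m* / (c_S·n* + c_Y·m*). -/
/-!
At the optimum each variance term is a fixed multiple of the money spent on it:
`σ_eval²/n* = λ c_S n*` and `σ_cal²/m* = λ c_Y m*` with the same `λ = (D/B)²`, where
`D = √(c_S σ_eval²) + √(c_Y σ_cal²)` (this is the first-order condition). Dividing both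
terms by `λ` turns the variance share into the budget share.
-/

theorem div_eq_mul_div_sq_of_eq_mul_sqrt_div (s c k x : ℝ) (hx : x = k * √(s / c)) :
    s / x = c * x / k ^ 2 := by
  rcases eq_or_ne k 0 with rfl | hk
  · simp [hx]
  rcases eq_or_ne √(s / c) 0 with hr | hr
  · simp [hx, hr]
  have hsc : 0 < s / c := Real.sqrt_pos.1 (lt_of_le_of_ne (Real.sqrt_nonneg _) hr.symm)
  have hc : c ≠ 0 := by rintro rfl; simp at hsc
  have hsq : √(s / c) ^ 2 = s / c := Real.sq_sqrt hsc.le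
  rw [hx, div_eq_div_iff (mul_ne_zero hk hr) (pow_ne_zero 2 hk)]
  calc s * k ^ 2 = c * (s / c) * k ^ 2 := by rw [mul_div_cancel₀ s hc]
    _ = c * (k * √(s / c)) * (k * √(s / c)) := by linear_combination (-(c * k ^ 2)) * hsq

theorem spend_balance_rule_general
    (σeval2 σcal2 cS cY B : ℝ)
    (hσe : 0 < σeval2) (hcS : 0 < cS) (hB : 0 < B)
    (nstar mstar : ℝ)
    (hn : nstar = B * Real.sqrt (σeval2 / cS)
            / (Real.sqrt (cS * σeval2) + Real.sqrt (cY * σcal2)))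
    (hm : mstar = B * Real.sqrt (σcal2 / cY)
            / (Real.sqrt (cS * σeval2) + Real.sqrt (cY * σcal2))) :
    (σcal2 / mstar) / (σeval2 / nstar + σcal2 / mstar)
      = cY * mstar / (cS * nstar + cY * mstar) := by
  set D := Real.sqrt (cS * σeval2) + Real.sqrt (cY * σcal2)
  have hk : B / D ≠ 0 := div_ne_zero hB.ne' (by positivity)
  have hn' : σeval2 / nstar = cS * nstar / (B / D) ^ 2 :=
    div_eq_mul_div_sq_of_eq_mul_sqrt_div _ _ _ _ (by rw [hn, mul_div_right_comm])
  have hm' : σcal2 / mstar = cY * mstar / (B / D) ^ 2 :=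
    div_eq_mul_div_sq_of_eq_mul_sqrt_div _ _ _ _ (by rw [hm, mul_div_right_comm])
  rw [hn', hm', ← add_div, div_div_div_cancel_right₀ (pow_ne_zero 2 hk)]

/-- Spend-Balance Rule: at the optimal allocation of the Square Root Law, the
calibration variance share `ω = (σ_cal²/m*)/(σ_eval²/n* + σ_cal²/m*)` equals the oracle
budget share `c_Y m*/(c_S n* + c_Y m*)`. -/
theorem spend_balance_rule
    (σeval2 σcal2 cS cY B : ℝ)
    (hσe : 0 < σeval2) (hσc : 0 < σcal2) (hcS : 0 < cS) (hcY : 0 < cY) (hB : 0 < B)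
    (nstar mstar : ℝ)
    (hn : nstar = B * Real.sqrt (σeval2 / cS)
            / (Real.sqrt (cS * σeval2) + Real.sqrt (cY * σcal2)))
    (hm : mstar = B * Real.sqrt (σcal2 / cY)
            / (Real.sqrt (cS * σeval2) + Real.sqrt (cY * σcal2))) :
    (σcal2 / mstar) / (σeval2 / nstar + σcal2 / mstar)
      = cY * mstar / (cS * nstar + cY * mstar) :=
  spend_balance_rule_general σeval2 σcal2 cS cY B hσe hcS hB nstar mstar hn hm
end
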